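/- Let U ⊆ ℝ^N be open, α a smooth 1-form on U, β a closed smooth 1-form on U, f : U → ℝ smooth, and ζ a smooth vector field with L_ζ(α + β) = df. Then the function J(x) = (α+β)(x)(ζ(x)) − f(x) is preserved under the flow of ζ: dJ(x)(ζ(x)) = 0 for all x ∈ U. -/

import Mathlib

noncomputable section
open scoped ContDiff

/-- The Lie derivative of a 1-form `α` on `ℝ^N` along a vector field `ζ`:
`(L_ζ α)(x)(v) = (Dα(x)(ζ(x)))(v) + α(x)(Dζ(x)(v))`. -/
def lieDerivV {N : ℕ} (ζ : (Fin N → ℝ) → (Fin N → ℝ))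
    (α : (Fin N → ℝ) → ((Fin N → ℝ) →L[ℝ] ℝ)) (x : Fin N → ℝ) :
    (Fin N → ℝ) →L[ℝ] ℝ :=
  fderiv ℝ α x (ζ x) + (α x).comp (fderiv ℝ ζ x)

/-- The exterior derivative of a 1-form on `ℝ^N`:
`dα(x)(u,v) = (Dα(x)u)(v) − (Dα(x)v)(u)`. -/
def extDerivV {N : ℕ} (α : (Fin N → ℝ) → ((Fin N → ℝ) →L[ℝ] ℝ)) (x u v : Fin N → ℝ) : ℝ :=
  fderiv ℝ α x u v - fderiv ℝ α x v u

/-! Along `ζ` itself the interior-product term of Cartan's formula `d(ι_ζ γ) = L_ζ γ − ι_ζ dγ`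
drops out by antisymmetry of `dγ`, so `J = γ(ζ) − f` is constant along the flow of `ζ` as soon as
`L_ζ γ = df`. -/

section CartanFormula

variable {N : ℕ} {γ : (Fin N → ℝ) → ((Fin N → ℝ) →L[ℝ] ℝ)} {ζ : (Fin N → ℝ) → (Fin N → ℝ)}
  {x : Fin N → ℝ}

theorem extDerivV_self (γ : (Fin N → ℝ) → ((Fin N → ℝ) →L[ℝ] ℝ)) (x u : Fin N → ℝ) :
    extDerivV γ x u u = 0 :=
  sub_self _

theorem fderiv_clm_apply_eq_lieDerivV_sub_extDerivV (hγ : DifferentiableAt ℝ γ x)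
    (hζ : DifferentiableAt ℝ ζ x) (v : Fin N → ℝ) :
    fderiv ℝ (fun y => γ y (ζ y)) x v = lieDerivV ζ γ x v - extDerivV γ x (ζ x) v := by
  rw [fderiv_clm_apply hγ hζ, lieDerivV, extDerivV]
  simp only [add_apply, ContinuousLinearMap.coe_comp, Function.comp_apply,
    ContinuousLinearMap.flip_apply]
  ring

theorem fderiv_clm_apply_self_eq_lieDerivV (hγ : DifferentiableAt ℝ γ x)
    (hζ : DifferentiableAt ℝ ζ x) :
    fderiv ℝ (fun y => γ y (ζ y)) x (ζ x) = lieDerivV ζ γ x (ζ x) := by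
  rw [fderiv_clm_apply_eq_lieDerivV_sub_extDerivV hγ hζ, extDerivV_self, sub_zero]

theorem fderiv_clm_apply_sub_apply_self {f : (Fin N → ℝ) → ℝ} (hγ : DifferentiableAt ℝ γ x)
    (hζ : DifferentiableAt ℝ ζ x) (hf : DifferentiableAt ℝ f x) :
    fderiv ℝ (fun y => γ y (ζ y) - f y) x (ζ x) = lieDerivV ζ γ x (ζ x) - fderiv ℝ f x (ζ x) := by
  rw [fderiv_fun_sub (hγ.clm_apply hζ) hf, sub_apply,
    fderiv_clm_apply_self_eq_lieDerivV hγ hζ]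

end CartanFormula

theorem weak_noether_integral_preserved_by_flow_general {N : ℕ}
    (U : Set (Fin N → ℝ)) (hU : IsOpen U)
    (α β : (Fin N → ℝ) → ((Fin N → ℝ) →L[ℝ] ℝ))
    (ζ : (Fin N → ℝ) → (Fin N → ℝ)) (f : (Fin N → ℝ) → ℝ)
    (hα : ContDiffOn ℝ ∞ α U) (hβ : ContDiffOn ℝ ∞ β U)
    (hζ : ContDiffOn ℝ ∞ ζ U) (hf : ContDiffOn ℝ ∞ f U)
    (hsym : ∀ x ∈ U, lieDerivV ζ (fun y => α y + β y) x = fderiv ℝ f x) :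
    ∀ x ∈ U, fderiv ℝ (fun y => (α y + β y) (ζ y) - f y) x (ζ x) = 0 := by
  intro x hx
  have differentiableAt {F : Type} [NormedAddCommGroup F] [NormedSpace ℝ F]
      {g : (Fin N → ℝ) → F} (hg : ContDiffOn ℝ ∞ g U) : DifferentiableAt ℝ g x :=
    (hg.differentiableOn (by simp)).differentiableAt (hU.mem_nhds hx)
  have hγ : DifferentiableAt ℝ (fun y => α y + β y) x :=
    (differentiableAt hα).add (differentiableAt hβ)
  rw [fderiv_clm_apply_sub_apply_self hγ (differentiableAt hζ) (differentiableAt hf), hsym x hx,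
    sub_self]

/-- for a weak Noether symmetry `ζ` (`L_ζ(α + β) = df` on `U`, `β` closed),
the function `J(x) = (α+β)(x)(ζ(x)) − f(x)` is preserved under the flow of `ζ`. -/
theorem weak_noether_integral_preserved_by_flow {N : ℕ} (hN : 1 ≤ N)
    (U : Set (Fin N → ℝ)) (hU : IsOpen U)
    (α β : (Fin N → ℝ) → ((Fin N → ℝ) →L[ℝ] ℝ))
    (ζ : (Fin N → ℝ) → (Fin N → ℝ)) (f : (Fin N → ℝ) → ℝ)
    (hα : ContDiffOn ℝ ∞ α U) (hβ : ContDiffOn ℝ ∞ β U)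
    (hζ : ContDiffOn ℝ ∞ ζ U) (hf : ContDiffOn ℝ ∞ f U)
    (hβclosed : ∀ x ∈ U, ∀ u v, extDerivV β x u v = 0)
    (hsym : ∀ x ∈ U, lieDerivV ζ (fun y => α y + β y) x = fderiv ℝ f x) :
    ∀ x ∈ U, fderiv ℝ (fun y => (α y + β y) (ζ y) - f y) x (ζ x) = 0 :=
  weak_noether_integral_preserved_by_flow_general U hU α β ζ f hα hβ hζ hf hsym
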